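/- Let F′ be a k-component spanning forest of Ψ|ℵ, F a minimal principal of F′, X an element of ℵ not containing a root of F, and (x,y) the unique arc of F leaving X, with y ∈ Y ∈ ℵ. Then ψ^ℵ_{XY} − ψ_{xy} = λ^{•x}_X − λ^•_X ≥ 0, with equality if and only if F|_X is a minimum-weight entering tree on X (i.e., F|_X ∈ 𝑇̃^•_X). -/
import Mathlib


open Finset

/-- The arc relation of a digraph given by its finite set of arcs. -/
def arcRel {V : Type*} (A : Finset (V × V)) : V → V → Prop := fun a b => (a, b) ∈ A

/-- Two vertices are connected if they are related by the equivalence closure of the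
arc relation (connectivity in the underlying undirected graph). -/
def Conn {V : Type*} (A : Finset (V × V)) : V → V → Prop := Relation.EqvGen (arcRel A)

/-- An entering forest on vertex set `S`: all arcs have both endpoints in `S`,
each vertex has at most one outgoing arc, and there are no directed cycles. -/
def IsEnteringForestOn {V : Type*} (S : Finset V) (A : Finset (V × V)) : Prop :=
  (∀ p ∈ A, p.1 ∈ S ∧ p.2 ∈ S) ∧
  (∀ v z z' : V, (v, z) ∈ A → (v, z') ∈ A → z = z') ∧
  (∀ v : V, ¬ Relation.TransGen (arcRel A) v v)

/-- `A` has exactly `k` connected components on the vertex set `S`. -/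
def HasKComponentsOn {V : Type*} (S : Finset V) (A : Finset (V × V)) (k : ℕ) : Prop :=
  ∃ reps : Finset V, reps ⊆ S ∧ reps.card = k ∧
    ∀ v ∈ S, ∃! w, w ∈ reps ∧ Conn A v w

/-- An entering tree on vertex set `D` with root `q`: every non-root vertex has exactly
one outgoing arc, the root has none, and every vertex reaches the root. -/
def IsRootedTreeOn {V : Type*} (D : Finset V) (q : V) (A : Finset (V × V)) : Prop :=
  q ∈ D ∧ (∀ p ∈ A, p.1 ∈ D ∧ p.2 ∈ D) ∧
  (∀ v ∈ D, v ≠ q → ∃! z, (v, z) ∈ A) ∧ (∀ z, (q, z) ∉ A) ∧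
  ∀ v ∈ D, Relation.ReflTransGen (arcRel A) v q

/-- `P` is a partition of `S` into nonempty sets. -/
def IsPartitionOn {V : Type*} (S : Finset V) (P : Finset (Finset V)) : Prop :=
  (∀ X ∈ P, X.Nonempty ∧ X ⊆ S) ∧ ∀ v ∈ S, ∃! X, X ∈ P ∧ v ∈ X

/-- Restriction of the arc set `A` to the vertex set `X`. -/
def restrict {V : Type*} [DecidableEq V] (A : Finset (V × V)) (X : Finset V) :
    Finset (V × V) :=
  A.filter (fun p => p.1 ∈ X ∧ p.2 ∈ X)

/-- A forest (arc set `A`) is tree-divisible by the partition `P` if the restriction to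
each element of `P` is an entering tree. -/
def TreeDivisible {V : Type*} [DecidableEq V] (A : Finset (V × V))
    (P : Finset (Finset V)) : Prop :=
  ∀ X ∈ P, ∃ q, IsRootedTreeOn X q (restrict A X)

/-- The splitting of a tree-divisible forest `A` by the partition `P`: an arc `(X, Y)`
for each arc of `A` with tail in `X` and head in `Y ≠ X`. -/
def splitArcsOf {V : Type*} [DecidableEq V] (A : Finset (V × V))
    (P : Finset (Finset V)) : Finset (Finset V × Finset V) :=
  (P ×ˢ P).filter (fun Q => Q.1 ≠ Q.2 ∧ ∃ p ∈ A, p.1 ∈ Q.1 ∧ p.2 ∈ Q.2)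

/-- A digraph `AΨ` is tree-divisible by `P` if each `X ∈ P` carries an entering tree
made of arcs of `AΨ`. -/
def PsiDivisible {V : Type*} (AΨ : Finset (V × V)) (P : Finset (Finset V)) : Prop :=
  ∀ X ∈ P, ∃ q A', IsRootedTreeOn X q A' ∧ A' ⊆ AΨ

/-- The arc set of the splitting digraph `Ψ|ℵ`: an arc `(X, Y)` whenever the set
`T_{XY}` (entering trees on `X` in `Ψ` together with one arc of `Ψ` from the root
into `Y`) is nonempty. -/
def psiSplitArcs {V : Type*} (AΨ : Finset (V × V)) (P : Finset (Finset V)) :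
    Set (Finset V × Finset V) :=
  {Q | Q.1 ∈ P ∧ Q.2 ∈ P ∧ Q.1 ≠ Q.2 ∧
    ∃ q A', IsRootedTreeOn Q.1 q A' ∧ A' ⊆ AΨ ∧ ∃ r ∈ Q.2, (q, r) ∈ AΨ}

/-- Total weight of an arc set. -/
def totW {V : Type*} (w : V → V → ℝ) (A : Finset (V × V)) : ℝ :=
  ∑ p ∈ A, w p.1 p.2

/-- Outgoing weight `Υ^A_D`: the sum of weights of arcs of `A` with tail in `D`. -/
def outW {V : Type*} [DecidableEq V] (w : V → V → ℝ) (A : Finset (V × V))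
    (D : Finset V) : ℝ :=
  ∑ p ∈ A.filter (fun p => p.1 ∈ D), w p.1 p.2

/-- `λ^{•q}_X(A)`: minimal weight of an entering tree on `X` rooted at `q`, with arcs
from `A`. -/
noncomputable def lamRooted {V : Type*} (w : V → V → ℝ) (A : Finset (V × V))
    (X : Finset V) (q : V) : ℝ :=
  sInf {t : ℝ | ∃ A', IsRootedTreeOn X q A' ∧ A' ⊆ A ∧ t = totW w A'}

/-- `λ^•_X(A)`: minimal weight of an entering tree on `X` with arcs from `A`. -/
noncomputable def lamB {V : Type*} (w : V → V → ℝ) (A : Finset (V × V))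
    (X : Finset V) : ℝ :=
  sInf {t : ℝ | ∃ q A', IsRootedTreeOn X q A' ∧ A' ⊆ A ∧ t = totW w A'}

/-- `λ_{XY}(A)`: minimal weight of a tree of `T_{XY}`: an entering tree on `X` with arcs
from `A`, plus one arc of `A` from its root into `Y`. -/
noncomputable def lamXY {V : Type*} (w : V → V → ℝ) (A : Finset (V × V))
    (X Y : Finset V) : ℝ :=
  sInf {t : ℝ | ∃ q A' r, IsRootedTreeOn X q A' ∧ A' ⊆ A ∧ r ∈ Y ∧ (q, r) ∈ A ∧
    t = totW w A' + w q r}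

/-- `AF` is a principal of the spanning forest `F'` of the splitting digraph: a
tree-divisible spanning entering forest of `Ψ` whose splitting has arc set `A(F')`. -/
def IsPrincipal {V : Type*} [Fintype V] [DecidableEq V] (AΨ : Finset (V × V))
    (P : Finset (Finset V)) (F' : Finset (Finset V × Finset V))
    (AF : Finset (V × V)) : Prop :=
  AF ⊆ AΨ ∧ IsEnteringForestOn (Finset.univ : Finset V) AF ∧
    TreeDivisible AF P ∧ splitArcsOf AF P = F'
section Aux

variable {V : Type*}

lemma noCycle_aux {r : V → V → Prop} {q v : V}
    (hfun : ∀ a z z', r a z → r a z' → z = z')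
    (hq : ∀ z, ¬ r q z) (h : Relation.ReflTransGen r v q) :
    ¬ Relation.TransGen r v v := by
  induction h using Relation.ReflTransGen.head_induction_on with
  | refl =>
    intro hc
    obtain ⟨c, hqc, -⟩ := Relation.TransGen.head'_iff.mp hc
    exact hq c hqc
  | head hab hbq ih =>
    rename_i a b
    intro hc
    obtain ⟨c, hac, hca⟩ := Relation.TransGen.head'_iff.mp hc
    have : c = b := hfun a c b hac hab
    subst this
    exact ih (Relation.TransGen.tail' hca hab)

lemma rootedTree_acyclic {D : Finset V} {q : V} {A : Finset (V × V)}
    (h : IsRootedTreeOn D q A) (v : V) : ¬ Relation.TransGen (arcRel A) v v := by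
  obtain ⟨hqD, hends, huniq, hroot, hreach⟩ := h
  have hfun : ∀ a z z', arcRel A a z → arcRel A a z' → z = z' := by
    intro a z z' hz hz'
    by_cases ha : a = q
    · exact absurd hz (ha ▸ hroot z)
    · have haD : a ∈ D := (hends _ hz).1
      obtain ⟨u, hu, huu⟩ := huniq a haD ha
      rw [huu z hz, huu z' hz']
  intro hc
  obtain ⟨c, hvc, -⟩ := Relation.TransGen.head'_iff.mp hc
  have hvD : v ∈ D := (hends _ hvc).1
  exact noCycle_aux hfun hroot (hreach v hvD) hc

lemma wf_of_acyclic {α : Type*} [Finite α] {r : α → α → Prop}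
    (h : ∀ a, ¬ Relation.TransGen r a a) : WellFounded r := by
  have h1 : IsIrrefl α (Relation.TransGen r) := ⟨h⟩
  have h2 : IsTrans α (Relation.TransGen r) := ⟨fun _ _ _ => Relation.TransGen.trans⟩
  exact Subrelation.wf (fun hr => Relation.TransGen.single hr)
    (Finite.wellFounded_of_trans_of_irrefl _)

lemma forest_acyclic [Fintype V] [DecidableEq V]
    {P : Finset (Finset V)} {F' : Finset (Finset V × Finset V)} {H : Finset (V × V)}
    (hpart : IsPartitionOn (Finset.univ : Finset V) P)
    (hF'acyc : ∀ Z, ¬ Relation.TransGen (arcRel F') Z Z)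
    (hfun : ∀ a z z', (a, z) ∈ H → (a, z') ∈ H → z = z')
    (htd : TreeDivisible H P)
    (hsplit : splitArcsOf H P ⊆ F') (v : V) :
    ¬ Relation.TransGen (arcRel H) v v := by
  choose π hπ using fun u => hpart.2 u (Finset.mem_univ u)
  have hπP : ∀ u, π u ∈ P := fun u => (hπ u).1.1
  have hvπ : ∀ u, u ∈ π u := fun u => (hπ u).1.2
  set rt : V → V → Prop := fun a b => arcRel H a b ∧ π a = π b with hrtdef
  have hrtwf : WellFounded rt := by
    apply wf_of_acyclic
    intro a ha
    have key : ∀ {c b : V}, Relation.TransGen rt c b →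
        π c = π b ∧ Relation.TransGen (arcRel (restrict H (π c))) c b := by
      intro c b h
      induction h with
      | single hcb =>
        rename_i b'
        refine ⟨hcb.2, Relation.TransGen.single ?_⟩
        have hb : b' ∈ π c := by rw [hcb.2]; exact hvπ _
        exact Finset.mem_filter.mpr ⟨hcb.1, hvπ c, hb⟩
      | tail hcb hbd ih =>
        rename_i b d
        refine ⟨ih.1.trans hbd.2, ih.2.tail ?_⟩
        have hb : b ∈ π c := ih.1 ▸ hvπ b
        have hd : d ∈ π c := by rw [ih.1, hbd.2]; exact hvπ d
        exact Finset.mem_filter.mpr ⟨hbd.1, hb, hd⟩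
    obtain ⟨q0, htree⟩ := htd (π a) (hπP a)
    exact rootedTree_acyclic htree a (key ha).2
  have hrawf : WellFounded (arcRel F') := wf_of_acyclic hF'acyc
  have hwf : WellFounded (arcRel H) := by
    apply Subrelation.wf (r := InvImage (Prod.Lex (arcRel F') rt) (fun u => (π u, u)))
    · intro a b hab
      by_cases hp : π a = π b
      · have : rt a b := ⟨hab, hp⟩
        show Prod.Lex (arcRel F') rt (π a, a) (π b, b)
        rw [hp]
        exact Prod.Lex.right _ this
      · have hmem : (π a, π b) ∈ splitArcsOf H P := by
          refine Finset.mem_filter.mpr ⟨Finset.mem_product.mpr ⟨hπP a, hπP b⟩, hp,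
            (a, b), hab, hvπ a, hvπ b⟩
        exact Prod.Lex.left _ _ (hsplit hmem)
    · exact InvImage.wf _ (hrawf.prod_lex hrtwf)
  exact fun hc => hwf.transGen.isIrrefl.irrefl v hc

end Aux

/-- for a minimal principal `F` of `F'`, an element `X ∈ ℵ` containing no
root of `F`, and the unique arc `(x, y)` of `F` leaving `X` with head in `Y ∈ ℵ`:
`ψ^ℵ_{XY} − ψ_{xy} = λ^{•x}_X − λ^•_X ≥ 0`, with equality iff `F|_X` is a minimum-weight
entering tree on `X`. -/
theorem stmt16 {V : Type*} [Fintype V] [DecidableEq V] (w : V → V → ℝ)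
    (AΨ : Finset (V × V)) (P : Finset (Finset V)) (k : ℕ)
    (hpart : IsPartitionOn (Finset.univ : Finset V) P)
    (hΨdiv : PsiDivisible AΨ P)
    (F' : Finset (Finset V × Finset V)) (hF'sub : ↑F' ⊆ psiSplitArcs AΨ P)
    (hF' : IsEnteringForestOn P F') (hF'k : HasKComponentsOn P F' k)
    (AF : Finset (V × V)) (hprin : IsPrincipal AΨ P F' AF)
    (hmin : ∀ G : Finset (V × V), IsPrincipal AΨ P F' G → totW w AF ≤ totW w G)
    (X Y : Finset V) (hX : X ∈ P) (hY : Y ∈ P) (hXY : X ≠ Y)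
    (hnoroot : ∀ v ∈ X, ∃ z, (v, z) ∈ AF)
    (x y : V) (hxy : (x, y) ∈ AF) (hx : x ∈ X) (hy : y ∈ Y) :
    (lamXY w AΨ X Y - lamB w AΨ X) - w x y = lamRooted w AΨ X x - lamB w AΨ X ∧
      lamB w AΨ X ≤ lamRooted w AΨ X x ∧
      (lamXY w AΨ X Y - lamB w AΨ X = w x y ↔ totW w (restrict AF X) = lamB w AΨ X) := by
  obtain ⟨hAFΨ, hforest, htdiv, hsplitAF⟩ := hprin
  obtain ⟨-, hfunF, hacycAF⟩ := hforest
  -- parts are pairwise disjoint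
  have hdisjP : ∀ {v : V} {Z W : Finset V}, Z ∈ P → W ∈ P → v ∈ Z → v ∈ W → Z = W := by
    intro v Z W hZ hW hvZ hvW
    obtain ⟨U, -, hU⟩ := hpart.2 v (Finset.mem_univ v)
    rw [hU Z ⟨hZ, hvZ⟩, hU W ⟨hW, hvW⟩]
  have hyX : y ∉ X := fun h => hXY (hdisjP hX hY h hy)
  -- the restriction of AF to X is a rooted tree with root x
  have htreeX : IsRootedTreeOn X x (restrict AF X) := by
    obtain ⟨q0, ht⟩ := htdiv X hX
    have hq0 : q0 = x := by
      by_contra hne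
      obtain ⟨z, hz, -⟩ := ht.2.2.1 x hx (fun h => hne h.symm)
      have hzAF : (x, z) ∈ AF := (Finset.mem_filter.mp hz).1
      have hzX : z ∈ X := (Finset.mem_filter.mp hz).2.2
      exact hyX ((hfunF x z y hzAF hxy) ▸ hzX)
    exact hq0 ▸ ht
  -- every arc of AF with tail in X lies in S := insert (x,y) (restrict AF X)
  have hF4 : ∀ p ∈ AF, p.1 ∈ X → p ∈ insert (x, y) (restrict AF X) := by
    intro p hp h1
    by_cases hpx : p.1 = x
    · have hp' : (p.1, p.2) ∈ AF := by rwa [Prod.mk.eta]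
      have : p.2 = y := hfunF x p.2 y (hpx ▸ hp') hxy
      have : p = (x, y) := Prod.ext hpx this
      exact this ▸ Finset.mem_insert_self _ _
    · obtain ⟨z, hz, -⟩ := htreeX.2.2.1 p.1 h1 hpx
      have hzAF : (p.1, z) ∈ AF := (Finset.mem_filter.mp hz).1
      have : z = p.2 := hfunF p.1 z p.2 hzAF (by rw [Prod.mk.eta]; exact hp)
      exact Finset.mem_insert_of_mem (by rw [← Prod.mk.eta (p := p)]; exact this ▸ hz)
  set T := restrict AF X with hTdef
  set S : Finset (V × V) := insert (x, y) T with hSdef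
  have hxyT : (x, y) ∉ T := by
    intro h
    exact hyX (Finset.mem_filter.mp h).2.2
  have hTsub : T ⊆ AF := Finset.filter_subset _ _
  have hSsub : S ⊆ AF := Finset.insert_subset hxy hTsub
  have hnotail : ∀ p ∈ AF \ S, p.1 ∉ X := by
    intro p hp h
    exact (Finset.mem_sdiff.mp hp).2 (hF4 p (Finset.mem_sdiff.mp hp).1 h)
  -- THE SWAP INEQUALITY
  have hswap : ∀ (q : V) (A' : Finset (V × V)) (r : V), IsRootedTreeOn X q A' → A' ⊆ AΨ →
      r ∈ Y → (q, r) ∈ AΨ → totW w T + w x y ≤ totW w A' + w q r := by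
    intro q A' r htA hA'Ψ hr hqr
    set G : Finset (V × V) := insert (q, r) ((AF \ S) ∪ A') with hGdef
    have hA'ends := htA.2.1
    have hqX : q ∈ X := htA.1
    have hA'q : ∀ z, (q, z) ∉ A' := htA.2.2.2.1
    have hrX : r ∉ X := fun h => hXY (hdisjP hX hY h hr)
    have hqr_nG' : (q, r) ∉ (AF \ S) ∪ A' := by
      intro h
      rcases Finset.mem_union.mp h with h | h
      · exact hnotail _ h hqX
      · exact hA'q r h
    have hdisjA' : Disjoint (AF \ S) A' := by
      rw [Finset.disjoint_right]
      intro p hp hp'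
      exact hnotail p hp' (hA'ends p hp).1
    -- weights
    have hwG : totW w G = w q r + (totW w (AF \ S) + totW w A') := by
      simp only [totW, hGdef]
      rw [Finset.sum_insert hqr_nG', Finset.sum_union hdisjA']
    have hwAF : totW w AF = totW w (AF \ S) + (w x y + totW w T) := by
      simp only [totW, hSdef]
      rw [← Finset.sum_sdiff hSsub, Finset.sum_insert hxyT]
    -- G is a principal of F'
    have hGsubΨ : G ⊆ AΨ := by
      refine Finset.insert_subset hqr (Finset.union_subset ?_ hA'Ψ)
      exact (Finset.sdiff_subset).trans hAFΨ
    have hresX : restrict G X = A' := by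
      ext p
      simp only [_root_.restrict, Finset.mem_filter, hGdef, Finset.mem_insert, Finset.mem_union]
      constructor
      · rintro ⟨(rfl | hp | hp), h1, h2⟩
        · exact absurd h2 hrX
        · exact absurd h1 (hnotail p hp)
        · exact hp
      · intro hp
        exact ⟨Or.inr (Or.inr hp), (hA'ends p hp).1, (hA'ends p hp).2⟩
    have hresZ : ∀ Z ∈ P, Z ≠ X → restrict G Z = restrict AF Z := by
      intro Z hZ hZX
      ext p
      simp only [_root_.restrict, Finset.mem_filter, hGdef, Finset.mem_insert, Finset.mem_union,
        Finset.mem_sdiff]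
      constructor
      · rintro ⟨(rfl | ⟨hp, -⟩ | hp), h1, h2⟩
        · exact absurd (hdisjP hX hZ hqX h1) (fun h => hZX h.symm)
        · exact ⟨hp, h1, h2⟩
        · exact absurd (hdisjP hX hZ (hA'ends p hp).1 h1) (fun h => hZX h.symm)
      · rintro ⟨hp, h1, h2⟩
        refine ⟨Or.inr (Or.inl ⟨hp, ?_⟩), h1, h2⟩
        intro hpS
        rcases Finset.mem_insert.mp hpS with rfl | hpT
        · exact hZX (hdisjP hZ hX h1 hx)
        · exact hZX (hdisjP hZ hX h1 (Finset.mem_filter.mp hpT).2.1)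
    have htdG : TreeDivisible G P := by
      intro Z hZ
      by_cases hZX : Z = X
      · subst hZX
        rw [hresX]
        exact ⟨q, htA⟩
      · rw [hresZ Z hZ hZX]
        exact htdiv Z hZ
    have hXYF' : (X, Y) ∈ F' := by
      rw [← hsplitAF]
      exact Finset.mem_filter.mpr ⟨Finset.mem_product.mpr ⟨hX, hY⟩, hXY, (x, y), hxy, hx, hy⟩
    have hsplitG : splitArcsOf G P = F' := by
      ext Q
      constructor
      · intro hQ
        obtain ⟨hQP, hne, p, hpG, hp1, hp2⟩ := Finset.mem_filter.mp hQ
        obtain ⟨h1, h2⟩ := Finset.mem_product.mp hQP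
        rcases Finset.mem_insert.mp hpG with rfl | hpG'
        · have e1 : Q.1 = X := hdisjP h1 hX hp1 hqX
          have e2 : Q.2 = Y := hdisjP h2 hY hp2 hr
          have : Q = (X, Y) := Prod.ext e1 e2
          rw [this]
          exact hXYF'
        · rcases Finset.mem_union.mp hpG' with hp | hp
          · rw [← hsplitAF]
            exact Finset.mem_filter.mpr ⟨hQP, hne, p, (Finset.mem_sdiff.mp hp).1, hp1, hp2⟩
          · have e1 : Q.1 = X := hdisjP h1 hX hp1 (hA'ends p hp).1
            have e2 : Q.2 = X := hdisjP h2 hX hp2 (hA'ends p hp).2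
            exact absurd (e1.trans e2.symm) hne
      · intro hQ
        have hQ' : Q ∈ splitArcsOf AF P := hsplitAF ▸ hQ
        obtain ⟨hQP, hne, p, hpAF, hp1, hp2⟩ := Finset.mem_filter.mp hQ'
        obtain ⟨h1, h2⟩ := Finset.mem_product.mp hQP
        by_cases hpS : p ∈ S
        · rcases Finset.mem_insert.mp hpS with rfl | hpT
          · have e1 : Q.1 = X := hdisjP h1 hX hp1 hx
            have e2 : Q.2 = Y := hdisjP h2 hY hp2 hy
            refine Finset.mem_filter.mpr ⟨hQP, hne, (q, r), Finset.mem_insert_self _ _,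
              ?_, ?_⟩
            · rw [e1]; exact hqX
            · rw [e2]; exact hr
          · have e1 : Q.1 = X := hdisjP h1 hX hp1 (Finset.mem_filter.mp hpT).2.1
            have e2 : Q.2 = X := hdisjP h2 hX hp2 (Finset.mem_filter.mp hpT).2.2
            exact absurd (e1.trans e2.symm) hne
        · exact Finset.mem_filter.mpr ⟨hQP, hne, p,
            Finset.mem_insert_of_mem (Finset.mem_union_left _ (Finset.mem_sdiff.mpr ⟨hpAF, hpS⟩)),
            hp1, hp2⟩
    have hfunG : ∀ a z z', (a, z) ∈ G → (a, z') ∈ G → z = z' := by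
      have memcase : ∀ {a z : V}, (a, z) ∈ G →
          (a = q ∧ z = r) ∨ ((a, z) ∈ AF ∧ a ∉ X) ∨ (a, z) ∈ A' := by
        intro a z h
        rcases Finset.mem_insert.mp h with he | h
        · left
          exact ⟨congrArg Prod.fst he, congrArg Prod.snd he⟩
        · rcases Finset.mem_union.mp h with h | h
          · exact Or.inr (Or.inl ⟨(Finset.mem_sdiff.mp h).1, hnotail _ h⟩)
          · exact Or.inr (Or.inr h)
      intro a z z' h h'
      rcases memcase h with ⟨rfl, rfl⟩ | ⟨hF, hnX⟩ | hA
      · rcases memcase h' with ⟨-, rfl⟩ | ⟨-, hnX⟩ | hA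
        · rfl
        · exact absurd hqX hnX
        · exact absurd hA (hA'q z')
      · rcases memcase h' with ⟨rfl, -⟩ | ⟨hF', -⟩ | hA
        · exact absurd hqX hnX
        · exact hfunF a z z' hF hF'
        · exact absurd (hA'ends _ hA).1 hnX
      · rcases memcase h' with ⟨rfl, -⟩ | ⟨-, hnX⟩ | hA'
        · exact absurd hA (hA'q z)
        · exact absurd (hA'ends _ hA).1 hnX
        · have haX : a ∈ X := (hA'ends _ hA).1
          have hne : a ≠ q := fun he => hA'q z (he ▸ hA)
          obtain ⟨u, -, hu⟩ := htA.2.2.1 a haX hne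
          rw [hu z hA, hu z' hA']
    have hacycG : ∀ v, ¬ Relation.TransGen (arcRel G) v v :=
      forest_acyclic hpart hF'.2.2 hfunG htdG (fun _ h => hsplitG ▸ h)
    have hprinG : IsPrincipal AΨ P F' G :=
      ⟨hGsubΨ, ⟨fun p _ => ⟨Finset.mem_univ _, Finset.mem_univ _⟩, hfunG, hacycG⟩, htdG, hsplitG⟩
    have := hmin G hprinG
    rw [hwAF, hwG] at this
    linarith
  -- values of the infima
  have hTΨ : T ⊆ AΨ := hTsub.trans hAFΨ
  have hrootedval : lamRooted w AΨ X x = totW w T := by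
    apply IsLeast.csInf_eq
    constructor
    · exact ⟨T, htreeX, hTΨ, rfl⟩
    · rintro t ⟨A', ht, hsub, rfl⟩
      have := hswap x A' y ht hsub hy (hAFΨ hxy)
      linarith
  have hXYval : lamXY w AΨ X Y = totW w T + w x y := by
    apply IsLeast.csInf_eq
    constructor
    · exact ⟨x, T, y, htreeX, hTΨ, hy, hAFΨ hxy, rfl⟩
    · rintro t ⟨q, A', r, ht, hsub, hr, hqr, rfl⟩
      exact hswap q A' r ht hsub hr hqr
  have hbdd : BddBelow {t : ℝ | ∃ q A', IsRootedTreeOn X q A' ∧ A' ⊆ AΨ ∧ t = totW w A'} := by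
    apply Set.Finite.bddBelow
    apply Set.Finite.subset ((AΨ.powerset.finite_toSet).image (totW w))
    rintro t ⟨q, A', -, hsub, rfl⟩
    exact ⟨A', by simpa using hsub, rfl⟩
  have hBle : lamB w AΨ X ≤ totW w T :=
    csInf_le hbdd ⟨x, T, htreeX, hTΨ, rfl⟩
  refine ⟨?_, ?_, ?_⟩
  · rw [hXYval, hrootedval]; ring
  · rw [hrootedval]; exact hBle
  · rw [hXYval]
    constructor <;> intro h <;> linarith
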